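/- Let S be a posemigroup and Q(S) the quantale of closed lower sets of S (fixpoints of the closure D ↦ D̄). The map τ: S → Q(S), τ(s) = s↓, is a closure-preserving posemigroup morphism with the universal property: for every quantale Q and every closure-preserving posemigroup morphism f: S → Q there exists a unique quantale morphism g: Q(S) → Q with g ∘ τ = f, given by g(D) = ⋁ f(D). -/

import Mathlib

/-!
In a quantale the closure of a set is the principal downset of its join, so a closure-preserving
`f` sends every element of `D̄` below `⋁ f(D)`; that is, `⋁ f(D̄) = ⋁ f(D)`. Hence
`g D = ⋁ f(D)` does not see the closures in the product `(D·E)̄` and the join `(⋃ Dᵢ)̄` of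
`Q(S)`, and it preserves both because `f` is multiplicative and multiplication in a quantale
distributes over joins.
-/

open Pointwise

/-- The closure `D̄` of a subset of a posemigroup, with `b, c` ranging over `S¹`
(the four cases correspond to `b = c = 1`, `c = 1`, `b = 1`, and `b, c ∈ S`). -/
def pcl (S : Type*) [Semigroup S] [PartialOrder S] (D : Set S) : Set S :=
  {x | ∀ a : S,
    ((∀ d ∈ D, d ≤ a) → x ≤ a) ∧
    (∀ b : S, (∀ d ∈ D, b * d ≤ a) → b * x ≤ a) ∧
    (∀ c : S, (∀ d ∈ D, d * c ≤ a) → x * c ≤ a) ∧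
    (∀ b c : S, (∀ d ∈ D, b * d * c ≤ a) → b * x * c ≤ a)}

/-- A marked quantale structure on a posemigroup `S`: a marking (set of admissible
subsets) containing singletons and closed under translations by elements of `S¹`,
such that every admissible set has a join over which multiplication distributes. -/
structure MarkedQuantale (S : Type*) [Semigroup S] [PartialOrder S] : Type _ where
  mark : Set (Set S)
  singleton_mem : ∀ a : S, {a} ∈ mark
  mul_left_mem : ∀ G ∈ mark, ∀ a : S, (a * ·) '' G ∈ mark
  mul_right_mem : ∀ G ∈ mark, ∀ b : S, (· * b) '' G ∈ mark
  mul_both_mem : ∀ G ∈ mark, ∀ a b : S, (fun x => a * x * b) '' G ∈ mark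
  exists_lub : ∀ M ∈ mark, ∃ m : S, IsLUB M m
  lub_mul_left : ∀ M ∈ mark, ∀ m : S, IsLUB M m → ∀ a : S, IsLUB ((a * ·) '' M) (a * m)
  lub_mul_right : ∀ M ∈ mark, ∀ m : S, IsLUB M m → ∀ b : S, IsLUB ((· * b) '' M) (m * b)
  lub_mul_both : ∀ M ∈ mark, ∀ m : S, IsLUB M m → ∀ a b : S,
    IsLUB ((fun x => a * x * b) '' M) (a * m * b)

/-- `D` is an `A`-ideal: a lower set closed under joins of its admissible subsets. -/
def IsAIdeal {S : Type*} [Semigroup S] [PartialOrder S] (A : Set (Set S)) (D : Set S) : Prop :=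
  IsLowerSet D ∧ ∀ M ∈ A, M ⊆ D → ∀ m : S, IsLUB M m → m ∈ D

section Closure

variable {S : Type*} [Semigroup S] [PartialOrder S]

lemma subset_pcl (D : Set S) : D ⊆ pcl S D :=
  fun x hx _ => ⟨fun h => h x hx, fun _ h => h x hx, fun _ h => h x hx, fun _ _ h => h x hx⟩

lemma pcl_mono {D E : Set S} (h : D ⊆ E) : pcl S D ⊆ pcl S E := by
  intro x hx a
  obtain ⟨h1, h2, h3, h4⟩ := hx a
  exact ⟨fun hE => h1 fun d hd => hE d (h hd), fun b hE => h2 b fun d hd => hE d (h hd),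
    fun c hE => h3 c fun d hd => hE d (h hd), fun b c hE => h4 b c fun d hd => hE d (h hd)⟩

lemma pcl_pcl (D : Set S) : pcl S (pcl S D) = pcl S D := by
  refine (subset_pcl _).antisymm' fun x hx a => ?_
  obtain ⟨h1, h2, h3, h4⟩ := hx a
  exact ⟨fun hD => h1 fun e he => (he a).1 hD, fun b hD => h2 b fun e he => (he a).2.1 b hD,
    fun c hD => h3 c fun e he => (he a).2.2.1 c hD,
    fun b c hD => h4 b c fun e he => (he a).2.2.2 b c hD⟩

lemma pcl_Iic (s : S) : pcl S (Set.Iic s) = Set.Iic s :=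
  (subset_pcl _).antisymm' fun _ hx => (hx s).1 fun _ hd => hd

variable (S) in
abbrev ClosedLowerSet : Type _ := {D : Set S // IsLowerSet D ∧ pcl S D = D}

variable [MulLeftMono S] [MulRightMono S]

lemma isLowerSet_pcl (D : Set S) : IsLowerSet (pcl S D) := by
  intro x y hyx hx a
  obtain ⟨h1, h2, h3, h4⟩ := hx a
  exact ⟨fun hD => hyx.trans (h1 hD), fun b hD => (mul_le_mul_right hyx b).trans (h2 b hD),
    fun c hD => (mul_le_mul_left hyx c).trans (h3 c hD),
    fun b c hD => (mul_le_mul_left (mul_le_mul_right hyx b) c).trans (h4 b c hD)⟩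

lemma pcl_lowerClosure_Iic_mul_Iic (a b : S) :
    pcl S ↑(lowerClosure (Set.Iic a * Set.Iic b)) = Set.Iic (a * b) := by
  refine subset_antisymm ?_ ((isLowerSet_pcl _).Iic_subset ?_)
  · rw [← pcl_Iic (a * b)]
    refine pcl_mono fun x hx => ?_
    obtain ⟨_, ⟨u, hu, v, hv, rfl⟩, hx⟩ := mem_lowerClosure.1 hx
    exact hx.trans (mul_le_mul' hu hv)
  · exact subset_pcl _ (subset_lowerClosure (Set.mul_mem_mul le_rfl le_rfl))

lemma coe_subset_pcl_biUnion_of_isLUB {F : Set (ClosedLowerSet S)} {L : ClosedLowerSet S}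
    (hL : IsLUB F L) :
    (L : Set S) ⊆ pcl S (⋃ D ∈ F, (D : Set S)) :=
  hL.2 (show ⟨_, isLowerSet_pcl _, pcl_pcl _⟩ ∈ upperBounds F from fun _ hD =>
    (Set.subset_biUnion_of_mem (u := fun E : ClosedLowerSet S => (E : Set S)) hD).trans
      (subset_pcl _))

end Closure

section Quantale

open Quantale

variable {Q : Type*} [Semigroup Q] [CompleteLattice Q] [IsQuantale Q]

lemma mul_sSup_mul_distrib (b c : Q) (D : Set Q) : b * sSup D * c = ⨆ d ∈ D, b * d * c := by
  rw [mul_sSup_distrib, ← sSup_image, sSup_mul_distrib, iSup_image]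

lemma pcl_eq_Iic_sSup (D : Set Q) : pcl Q D = Set.Iic (sSup D) := by
  refine subset_antisymm (fun x hx => (hx (sSup D)).1 fun d hd => le_sSup hd) fun x hx a => ?_
  refine ⟨fun h => hx.trans (sSup_le h), fun b h => ?_, fun c h => ?_, fun b c h => ?_⟩
  · exact (mul_le_mul_right hx b).trans (by rw [mul_sSup_distrib]; exact iSup₂_le h)
  · exact (mul_le_mul_left hx c).trans (by rw [sSup_mul_distrib]; exact iSup₂_le h)
  · exact (mul_le_mul_left (mul_le_mul_right hx b) c).trans
      (by rw [mul_sSup_mul_distrib]; exact iSup₂_le h)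

lemma sSup_image_mul {S : Type*} [Mul S] {f : S → Q} (hf : ∀ a b, f (a * b) = f a * f b)
    (D E : Set S) : sSup (f '' (D * E)) = sSup (f '' D) * sSup (f '' E) := by
  rw [← Set.image2_mul, Set.image_image2, sSup_image2, sSup_mul_distrib, iSup_image]
  simp only [mul_sSup_distrib, iSup_image, hf]

end Quantale

section Extension

open Quantale

variable {S : Type*} [Semigroup S] [PartialOrder S]
  {Q : Type*} [Semigroup Q] [CompleteLattice Q] [IsQuantale Q] {f : S → Q}

lemma sSup_image_pcl_lowerClosure
    (hf : ∀ M : Set S, f '' pcl S ↑(lowerClosure M) ⊆ pcl Q ↑(lowerClosure (f '' M)))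
    (M : Set S) : sSup (f '' pcl S ↑(lowerClosure M)) = sSup (f '' M) := by
  refine le_antisymm (sSup_le ?_) (sSup_le_sSup (Set.image_mono
    (subset_lowerClosure.trans (subset_pcl _))))
  rintro _ hx
  have hle := hf M hx
  rw [pcl_eq_Iic_sSup] at hle
  refine hle.trans (sSup_le fun y hy => ?_)
  obtain ⟨z, hz, hyz⟩ := mem_lowerClosure.1 hy
  exact hyz.trans (le_sSup hz)

end Extension

/-- `τ : S → Q(S)`, `τ s = s↓`, is a closure-preserving posemigroup morphism into the
quantale `Q(S)` of closed lower sets, with the universal property: every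
closure-preserving posemigroup morphism `f` from `S` into a quantale `Q` factors
uniquely through `τ` via a quantale morphism `g`, given by `g D = ⋁ f(D)`. -/
theorem stmt17 {S : Type*} [Semigroup S] [PartialOrder S]
    [CovariantClass S S (· * ·) (· ≤ ·)]
    [CovariantClass S S (Function.swap (· * ·)) (· ≤ ·)] :
    ∃ τ : S → {D : Set S // IsLowerSet D ∧ pcl S D = D},
      (∀ s : S, (↑(τ s) : Set S) = Set.Iic s) ∧
      -- τ is a posemigroup morphism into Q(S)
      (Monotone τ) ∧
      (∀ a b : S,
        (↑(τ (a * b)) : Set S) =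
          pcl S ↑(lowerClosure ((↑(τ a) : Set S) * (↑(τ b) : Set S)))) ∧
      -- τ is closure preserving: τ((M↓)̄) ⊆ (⋁ τ(M))↓ in Q(S)
      (∀ M : Set S, ∀ x ∈ pcl S ↑(lowerClosure M),
        (↑(τ x) : Set S) ⊆ pcl S (⋃ m ∈ M, Set.Iic m)) ∧
      -- universal property
      (∀ (Q : Type*) [Semigroup Q] [CompleteLattice Q] [IsQuantale Q],
        ∀ f : S → Q, Monotone f → (∀ a b : S, f (a * b) = f a * f b) →
        (∀ M : Set S, f '' pcl S ↑(lowerClosure M) ⊆ pcl Q ↑(lowerClosure (f '' M))) →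
        ∃! g : {D : Set S // IsLowerSet D ∧ pcl S D = D} → Q,
          (∀ D E P : {D : Set S // IsLowerSet D ∧ pcl S D = D},
            (↑P : Set S) = pcl S ↑(lowerClosure ((↑D : Set S) * (↑E : Set S))) →
            g P = g D * g E) ∧
          (∀ (F : Set {D : Set S // IsLowerSet D ∧ pcl S D = D})
              (L : {D : Set S // IsLowerSet D ∧ pcl S D = D}),
            IsLUB F L → g L = ⨆ D ∈ F, g D) ∧
          (∀ s : S, g (τ s) = f s) ∧
          (∀ D : {D : Set S // IsLowerSet D ∧ pcl S D = D},
            g D = sSup (f '' (↑D : Set S)))) := by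
  refine ⟨fun s => ⟨Set.Iic s, isLowerSet_Iic s, pcl_Iic s⟩, fun _ => rfl,
    fun _ _ h => Set.Iic_subset_Iic.2 h, fun a b => (pcl_lowerClosure_Iic_mul_Iic a b).symm,
    fun M x hx => ?_, fun Q _ _ _ f hmono hmul hclosure => ?_⟩
  · rw [← coe_lowerClosure]
    exact (isLowerSet_pcl _).Iic_subset hx
  refine ⟨fun D => sSup (f '' D), ⟨fun D E P hP => ?_, fun F L hL => ?_, fun s => ?_,
    fun _ => rfl⟩, fun g hg => funext hg.2.2.2⟩
  · simp only [hP, sSup_image_pcl_lowerClosure hclosure, sSup_image_mul hmul]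
  · refine le_antisymm ?_ (iSup₂_le fun D hD => sSup_le_sSup (Set.image_mono (hL.1 hD)))
    calc sSup (f '' L) ≤ sSup (f '' pcl S ↑(lowerClosure (⋃ D ∈ F, (D : Set S)))) :=
          sSup_le_sSup (Set.image_mono
            ((coe_subset_pcl_biUnion_of_isLUB hL).trans (pcl_mono subset_lowerClosure)))
      _ = ⨆ D ∈ F, sSup (f '' D) := by
          simp only [sSup_image_pcl_lowerClosure hclosure, Set.image_iUnion₂, sSup_iUnion]
  · exact (hmono.map_isGreatest isGreatest_Iic).isLUB.sSup_eq
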